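/- arXiv:2303.08584 — 3 statements merged into one kernel-verified Lean document; each statement's English description precedes it below -/
import Mathlib

section
/- Let k ≥ 2 and let n₂, n₃ be nonnegative integers satisfying the combinatorial count 2(k² − k) = n₂ + 3n₃. Then there is no nonnegative integer d₁ with d₁ ≤ (2k−1)/2 satisfying d₁² − d₁(2k−1) + (2k−1)² = n₂ + 4n₃ + 1. (Hence an arrangement of k smooth conics with only nodes and ordinary triple points is never nearly free.) -/
/-- An arrangement of `k ≥ 2` smooth conics with only nodes (`n₂`) and ordinary
triple points (`n₃`), satisfying the combinatorial count `2(k²−k) = n₂ + 3n₃`,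
is never nearly free: there is no nonnegative integer `d₁ ≤ (2k−1)/2` with
`d₁² − d₁(2k−1) + (2k−1)² = n₂ + 4n₃ + 1`. -/
theorem conic_nodes_triple_never_nearly_free
    (k n₂ n₃ : ℤ) (hk : 2 ≤ k) (hn₂ : 0 ≤ n₂) (hn₃ : 0 ≤ n₃)
    (hcomb : 2 * (k ^ 2 - k) = n₂ + 3 * n₃) :
    ¬ ∃ d₁ : ℤ, 0 ≤ d₁ ∧ 2 * d₁ ≤ 2 * k - 1 ∧
      d₁ ^ 2 - d₁ * (2 * k - 1) + (2 * k - 1) ^ 2 = n₂ + 4 * n₃ + 1 := by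
  rintro ⟨d₁, hd₁, hle, heq⟩
  nlinarith [sq_nonneg (2 * d₁ - (2 * k - 1)), sq_nonneg (d₁ - k), hn₂, hn₃, hk]
end

section
/- Let H = f·g·∏_{i=2}^{m-2}(f + i·g) where f = 3x² + y² − 4z² and g = x² + 3y² − 4z². Then yz·∂H/∂x + xz·∂H/∂y + xy·∂H/∂z = 0; in particular mdr(H) ≤ 2. -/
open MvPolynomial

/-!
The derivation `D = yz ∂ₓ + xz ∂_y + xy ∂_z` sends each of `x², y², z²` to `2xyz`, so it kills
every diagonal quadric whose coefficients sum to zero, in particular `f` and `g`. Its kernel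
is a subalgebra, hence contains every polynomial in `f` and `g`, such as `H`.
-/

namespace MvPolynomial

variable (R : Type*) [CommSemiring R]

noncomputable def syzygyDerivation :
    Derivation R (MvPolynomial (Fin 3) R) (MvPolynomial (Fin 3) R) :=
  (X 1 * X 2 : MvPolynomial (Fin 3) R) • pderiv 0 +
    (X 0 * X 2 : MvPolynomial (Fin 3) R) • pderiv 1 + (X 0 * X 1 : MvPolynomial (Fin 3) R) • pderiv 2

variable {R}

theorem syzygyDerivation_apply (p : MvPolynomial (Fin 3) R) :
    syzygyDerivation R p =
      X 1 * X 2 * pderiv 0 p + X 0 * X 2 * pderiv 1 p + X 0 * X 1 * pderiv 2 p := by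
  simp [syzygyDerivation, smul_eq_mul]

theorem syzygyDerivation_X_sq (i : Fin 3) :
    syzygyDerivation R (X i ^ 2) = 2 * (X 0 * X 1 * X 2) := by
  rw [syzygyDerivation_apply]
  fin_cases i <;> simp [Derivation.leibniz_pow] <;> ring

theorem syzygyDerivation_C_mul (a : R) (p : MvPolynomial (Fin 3) R) :
    syzygyDerivation R (C a * p) = C a * syzygyDerivation R p := by
  rw [← smul_eq_C_mul, Derivation.map_smul, smul_eq_C_mul]

end MvPolynomial

theorem Algebra.pencil_prod_mem_adjoin {R A ι : Type*} [CommSemiring R] [CommSemiring A]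
    [Algebra R A] (f g : A) (s : Finset ι) (c : ι → R) :
    f * g * ∏ i ∈ s, (f + algebraMap R A (c i) * g) ∈ Algebra.adjoin R {f, g} := by
  have hf : f ∈ Algebra.adjoin R {f, g} := Algebra.subset_adjoin (by simp)
  have hg : g ∈ Algebra.adjoin R {f, g} := Algebra.subset_adjoin (by simp)
  exact Subalgebra.mul_mem _ (Subalgebra.mul_mem _ hf hg) <| Subalgebra.prod_mem _ fun i _ =>
    Subalgebra.add_mem _ hf (Subalgebra.mul_mem _ (Subalgebra.algebraMap_mem _ _) hg)

theorem jacobian_syzygy_conic_pencil_general (m : ℕ) :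
    let f : MvPolynomial (Fin 3) ℂ :=
      C 3 * X 0 ^ 2 + X 1 ^ 2 - C 4 * X 2 ^ 2
    let g : MvPolynomial (Fin 3) ℂ :=
      X 0 ^ 2 + C 3 * X 1 ^ 2 - C 4 * X 2 ^ 2
    let H : MvPolynomial (Fin 3) ℂ :=
      f * g * ∏ i ∈ Finset.Icc 2 (m - 2), (f + C (i : ℂ) * g)
    X 1 * X 2 * pderiv 0 H + X 0 * X 2 * pderiv 1 H + X 0 * X 1 * pderiv 2 H = 0 := by
  intro f g H
  have hf : syzygyDerivation ℂ f = 0 := by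
    simp only [f, map_add, map_sub, syzygyDerivation_C_mul, syzygyDerivation_X_sq]
    simp only [map_ofNat]
    ring
  have hg : syzygyDerivation ℂ g = 0 := by
    simp only [g, map_add, map_sub, syzygyDerivation_C_mul, syzygyDerivation_X_sq]
    simp only [map_ofNat]
    ring
  have hfg : Set.EqOn (syzygyDerivation ℂ) (0 : Derivation ℂ _ _) {f, g} := by
    rintro p (hp | hp) <;> rw [hp]
    exacts [hf, hg]
  have hH : H ∈ Algebra.adjoin ℂ {f, g} :=
    Algebra.pencil_prod_mem_adjoin f g (Finset.Icc 2 (m - 2)) (fun i : ℕ => (i : ℂ))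
  rw [← syzygyDerivation_apply]
  exact Derivation.eqOn_adjoin hfg hH

/-- For the pencil member product `H = f·g·∏_{i=2}^{m-2}(f + i·g)` with
`f = 3x² + y² − 4z²` and `g = x² + 3y² − 4z²`, one has the Jacobian syzygy
`yz·∂H/∂x + xz·∂H/∂y + xy·∂H/∂z = 0`. -/
theorem jacobian_syzygy_conic_pencil (m : ℕ) (hm : 4 ≤ m) :
    let f : MvPolynomial (Fin 3) ℂ :=
      C 3 * X 0 ^ 2 + X 1 ^ 2 - C 4 * X 2 ^ 2
    let g : MvPolynomial (Fin 3) ℂ :=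
      X 0 ^ 2 + C 3 * X 1 ^ 2 - C 4 * X 2 ^ 2
    let H : MvPolynomial (Fin 3) ℂ :=
      f * g * ∏ i ∈ Finset.Icc 2 (m - 2), (f + C (i : ℂ) * g)
    X 1 * X 2 * pderiv 0 H + X 0 * X 2 * pderiv 1 H + X 0 * X 1 * pderiv 2 H = 0 :=
  jacobian_syzygy_conic_pencil_general m
end

section
/- For integers k ≥ 3, d ≥ 3, suppose nonnegative integers n₂, n₃, n₄ satisfy d·k(k−1)/2 = n₂ + 3n₃ + 6n₄ (combinatorial count for a d-arrangement with ordinary singularities of multiplicity ≤ 4). Then there is no integer d₁ ≤ (dk−1)/2 with (dk−1)² − d₁(dk − d₁ − 1) = n₂ + 4n₃ + 9n₄. (Hence such d-arrangements are never free.) -/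
/-- A `d`-arrangement (`d ≥ 3`) of `k ≥ 3` smooth degree-`d` curves with only
ordinary singularities of multiplicity at most 4, satisfying the combinatorial
count `d·k(k−1)/2 = n₂ + 3n₃ + 6n₄`, is never free: there is no integer
`d₁ ≤ (dk−1)/2` with `(dk−1)² − d₁(dk − d₁ − 1) = n₂ + 4n₃ + 9n₄`. -/
theorem d_arrangement_never_free
    (d k n₂ n₃ n₄ : ℤ) (hd : 3 ≤ d) (hk : 3 ≤ k)
    (hn₂ : 0 ≤ n₂) (hn₃ : 0 ≤ n₃) (hn₄ : 0 ≤ n₄)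
    (hcomb : d * (k * (k - 1)) = 2 * (n₂ + 3 * n₃ + 6 * n₄)) :
    ¬ ∃ d₁ : ℤ, 2 * d₁ ≤ d * k - 1 ∧
      (d * k - 1) ^ 2 - d₁ * (d * k - d₁ - 1) = n₂ + 4 * n₃ + 9 * n₄ := by
  rintro ⟨d₁, hle, heq⟩
  nlinarith [sq_nonneg (d * k - 1 - 2 * d₁), sq_nonneg (d * k),
    mul_nonneg (mul_nonneg (sub_nonneg.2 hd) (by linarith : (0:ℤ) ≤ k)) (mul_nonneg (by linarith : (0:ℤ) ≤ d) (by linarith : (0:ℤ) ≤ k)),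
    hn₂, hn₃, hn₄, hcomb, heq]
end
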